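/- arXiv:1709.03350 — 5 statements merged into one kernel-verified Lean document; each statement's English description precedes it below -/
import Mathlib

section
/- Let (p_t)_{t ∈ (0,2T]} be probability densities on ℝ^d in C²(ℝ^d) satisfying the convolution semigroup property p_{s+t} = p_s ⋆ p_t for s, t, s+t ∈ (0,2T], and define P_t φ(x) := ∫_{ℝ^d} φ(x+y) p_t(y) dy for bounded Borel measurable φ. Let c : (0,T] → [0,∞). If for all t ∈ (0,T], all bounded Borel measurable φ and all i ∈ {1,…,d} the function P_t φ is partially differentiable with ‖∂_{x_i} P_t φ‖_∞ ≤ c(t) ‖φ‖_∞, then for all t ∈ (0,T], all bounded Borel measurable φ and all i, k ∈ {1,…,d} the second partial derivative ∂_{x_i} ∂_{x_k} P_{2t} φ exists and ‖∂_{x_i} ∂_{x_k} P_{2t} φ‖_∞ ≤ c(t)² ‖φ‖_∞. -/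
open MeasureTheory Filter Set
open scoped Topology Convolution

/-!
Write `P_t φ (z) = ∫ φ (z + y) p_t(y) dy`. The semigroup law and Fubini give
`P_{2t} φ = P_t g` with `g = P_t φ`. By hypothesis `∂_k g` exists everywhere and is bounded by
`c(t) ‖φ‖_∞`, so `g` is Lipschitz along `e_k` and differentiation passes under the integral:
`∂_k P_{2t} φ = P_t (∂_k g)`. Since `∂_k g` is again bounded and measurable (a pointwise limit of
difference quotients), the hypothesis applies to it and yields `c(t) · c(t) ‖φ‖_∞`.
-/

section LineDeriv

variable {𝕜 E F : Type*} [NontriviallyNormedField 𝕜] [NormedAddCommGroup E] [NormedSpace 𝕜 E]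
  [NormedAddCommGroup F] [NormedSpace 𝕜 F] {g : E → F} {g' : F} {a v : E}

theorem HasLineDerivAt.hasDerivAt_add_smul {s : 𝕜} (h : HasLineDerivAt 𝕜 g g' (a + s • v) v) :
    HasDerivAt (fun t : 𝕜 => g (a + t • v)) g' s := by
  have := HasDerivAt.comp_sub_const (f := fun t : 𝕜 => g (a + s • v + t • v)) s s
    (by simpa [HasLineDerivAt] using h)
  convert this using 2 with t
  rw [add_assoc, ← add_smul, add_sub_cancel]

end LineDeriv

section LineDerivReal

variable {E F : Type*} [NormedAddCommGroup E] [NormedSpace ℝ E]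
  [NormedAddCommGroup F] [NormedSpace ℝ F] {g : E → F} {v : E}

theorem dist_add_smul_le_of_norm_lineDeriv_le {C : ℝ} (hg : ∀ x, LineDifferentiableAt ℝ g x v)
    (hC : ∀ x, ‖lineDeriv ℝ g x v‖ ≤ C) (a : E) (s₁ s₂ : ℝ) :
    dist (g (a + s₁ • v)) (g (a + s₂ • v)) ≤ C * dist s₁ s₂ := by
  rw [dist_eq_norm, dist_eq_norm]
  exact Convex.norm_image_sub_le_of_norm_hasDerivWithin_le
    (fun s _ => (hg (a + s • v)).hasLineDerivAt.hasDerivAt_add_smul.hasDerivWithinAt)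
    (fun s _ => hC (a + s • v)) convex_univ (mem_univ s₂) (mem_univ s₁)

theorem stronglyMeasurable_lineDeriv_of_lineDifferentiableAt [MeasurableSpace E]
    [MeasurableAdd E] (hgm : StronglyMeasurable g) (hg : ∀ x, LineDifferentiableAt ℝ g x v) :
    StronglyMeasurable (fun x => lineDeriv ℝ g x v) :=
  stronglyMeasurable_of_tendsto (𝓝[≠] (0 : ℝ))
    (fun t => ((hgm.comp_measurable (measurable_add_const _)).sub hgm).const_smul t⁻¹)
    (tendsto_pi_nhds.2 fun x => (hg x).hasLineDerivAt.tendsto_slope_zero)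

end LineDerivReal

noncomputable def transitionOp {E : Type*} [Add E] [MeasurableSpace E] (μ : Measure E)
    (q φ : E → ℝ) (z : E) : ℝ :=
  ∫ y, φ (z + y) * q y ∂μ

section TransitionOp

variable {E : Type*} [NormedAddCommGroup E] [MeasurableSpace E] {μ : Measure E} {q r φ : E → ℝ}
  {M : ℝ}

theorem abs_transitionOp_le (hq_nonneg : ∀ y, 0 ≤ q y) (hq : Integrable q μ)
    (hq_one : ∫ y, q y ∂μ = 1) (hφ : ∀ x, |φ x| ≤ M) (z : E) :
    |transitionOp μ q φ z| ≤ M := by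
  calc |transitionOp μ q φ z| ≤ ∫ y, M * q y ∂μ :=
        norm_integral_le_of_norm_le (f := fun y => φ (z + y) * q y) (hq.const_mul M)
          (Eventually.of_forall fun y => by
            rw [Real.norm_eq_abs, abs_mul, abs_of_nonneg (hq_nonneg y)]
            exact mul_le_mul_of_nonneg_right (hφ _) (hq_nonneg y))
    _ = M := by rw [integral_const_mul, hq_one, mul_one]

variable [BorelSpace E]

theorem hasLineDerivAt_transitionOp [NormedSpace ℝ E] {g : E → ℝ} {v : E} {C : ℝ}
    (hq : Integrable q μ) (hg : Measurable g) (hg_bdd : ∀ x, |g x| ≤ M)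
    (hg_diff : ∀ x, LineDifferentiableAt ℝ g x v) (hg_deriv : ∀ x, |lineDeriv ℝ g x v| ≤ C)
    (z : E) :
    HasLineDerivAt ℝ (transitionOp μ q g) (transitionOp μ q (fun x => lineDeriv ℝ g x v) z)
      z v := by
  have hC : 0 ≤ C := (abs_nonneg _).trans (hg_deriv 0)
  have h_shift (s : ℝ) (y : E) : z + s • v + y = z + y + s • v := add_right_comm _ _ _
  refine (hasDerivAt_integral_of_dominated_loc_of_lip (F := fun s y => g (z + s • v + y) * q y)
    (x₀ := 0) (bound := fun y => C * ‖q y‖) univ_mem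
    (Eventually.of_forall fun s => ?_) ?_ ?_ (Eventually.of_forall fun y => ?_)
    (hq.norm.const_mul C) (Eventually.of_forall fun y => ?_)).2
  · exact (hg.comp (measurable_const_add _)).aestronglyMeasurable.mul hq.aestronglyMeasurable
  · exact hq.bdd_mul (hg.comp (measurable_const_add _)).aestronglyMeasurable
      (Eventually.of_forall fun y => (Real.norm_eq_abs _).trans_le (hg_bdd _))
  · exact ((stronglyMeasurable_lineDeriv_of_lineDifferentiableAt hg.stronglyMeasurable
      hg_diff).comp_measurable (measurable_const_add z)).aestronglyMeasurable.mul
      hq.aestronglyMeasurable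
  · refine (LipschitzWith.of_dist_le_mul fun s₁ s₂ => ?_).lipschitzOnWith
    rw [h_shift, h_shift, Real.coe_nnabs, abs_of_nonneg (by positivity), dist_eq_norm, ← sub_mul,
      norm_mul, ← dist_eq_norm, mul_right_comm]
    gcongr
    simpa only [Real.norm_eq_abs] using
      dist_add_smul_le_of_norm_lineDeriv_le hg_diff hg_deriv (z + y) s₁ s₂
  · simp only [h_shift]
    exact (hg_diff (z + y)).hasLineDerivAt.mul_const (q y)

variable [SecondCountableTopology E]

theorem measurable_transitionOp [SFinite μ] (hq : Measurable q) (hφ : Measurable φ) :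
    Measurable (transitionOp μ q φ) :=
  ((hφ.comp measurable_add).mul (hq.comp measurable_snd)).stronglyMeasurable
    |>.integral_prod_right'.measurable

theorem transitionOp_convolution [SigmaFinite μ] [μ.IsAddRightInvariant] (hq : Integrable q μ)
    (hr : Integrable r μ) (hφ : Measurable φ) (hφ_bdd : ∀ x, |φ x| ≤ M) :
    transitionOp μ (q ⋆[ContinuousLinearMap.mul ℝ ℝ, μ] r) φ =
      transitionOp μ q (transitionOp μ r φ) := by
  ext z
  have h_int : Integrable (Function.uncurry fun y w => φ (z + y) * (q w * r (y - w)))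
      (μ.prod μ) :=
    (hq.convolution_integrand (ContinuousLinearMap.mul ℝ ℝ) hr).bdd_mul
      ((hφ.comp (measurable_const_add z)).comp measurable_fst).aestronglyMeasurable
      (Eventually.of_forall fun y => (Real.norm_eq_abs _).trans_le (hφ_bdd _))
  calc transitionOp μ (q ⋆[ContinuousLinearMap.mul ℝ ℝ, μ] r) φ z
      = ∫ y, ∫ w, φ (z + y) * (q w * r (y - w)) ∂μ ∂μ := by
        simp only [transitionOp, convolution_def, ContinuousLinearMap.mul_apply',
          integral_const_mul]
    _ = ∫ w, (∫ y, φ (z + y) * r (y - w) ∂μ) * q w ∂μ := by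
        rw [integral_integral_swap h_int]
        congr with w
        rw [← integral_mul_const]
        congr with y
        ring
    _ = transitionOp μ q (transitionOp μ r φ) z := by
        congr with w
        rw [← integral_add_right_eq_self _ w]
        simp only [transitionOp, add_sub_cancel_right, add_assoc, add_comm w]

end TransitionOp

theorem semigroup_second_derivative_estimate_general
    {d : ℕ} (T : ℝ)
    (p : ℝ → EuclideanSpace ℝ (Fin d) → ℝ)
    (hp_reg : ∀ t ∈ Set.Ioc (0:ℝ) (2*T), ContDiff ℝ 2 (p t))
    (hp_nonneg : ∀ t ∈ Set.Ioc (0:ℝ) (2*T), ∀ x, 0 ≤ p t x)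
    (hp_int : ∀ t ∈ Set.Ioc (0:ℝ) (2*T), Integrable (p t) volume)
    (hp_one : ∀ t ∈ Set.Ioc (0:ℝ) (2*T), (∫ x, p t x) = 1)
    (hp_conv : ∀ s t : ℝ, 0 < s → 0 < t → s + t ≤ 2*T →
      ∀ x, p (s + t) x = ∫ y, p s (x - y) * p t y)
    (c : ℝ → ℝ)
    (h1 : ∀ t ∈ Set.Ioc (0:ℝ) T, ∀ φ : EuclideanSpace ℝ (Fin d) → ℝ, Measurable φ →
      (∃ M : ℝ, ∀ x, |φ x| ≤ M) → ∀ i : Fin d, ∀ x,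
        LineDifferentiableAt ℝ (fun z => ∫ y, φ (z + y) * p t y) x
          (EuclideanSpace.single i 1) ∧
        ∀ M : ℝ, (∀ z, |φ z| ≤ M) →
          |lineDeriv ℝ (fun z => ∫ y, φ (z + y) * p t y) x (EuclideanSpace.single i 1)|
            ≤ c t * M) :
    ∀ t ∈ Set.Ioc (0:ℝ) T, ∀ φ : EuclideanSpace ℝ (Fin d) → ℝ, Measurable φ →
      (∃ M : ℝ, ∀ x, |φ x| ≤ M) → ∀ i k : Fin d, ∀ x,
        LineDifferentiableAt ℝ (fun z => ∫ y, φ (z + y) * p (2*t) y) x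
          (EuclideanSpace.single k 1) ∧
        LineDifferentiableAt ℝ
          (fun z => lineDeriv ℝ (fun w => ∫ y, φ (w + y) * p (2*t) y) z
            (EuclideanSpace.single k 1)) x (EuclideanSpace.single i 1) ∧
        ∀ M : ℝ, (∀ z, |φ z| ≤ M) →
          |lineDeriv ℝ
              (fun z => lineDeriv ℝ (fun w => ∫ y, φ (w + y) * p (2*t) y) z
                (EuclideanSpace.single k 1)) x (EuclideanSpace.single i 1)|
            ≤ c t ^ 2 * M := by
  intro t ht φ hφ ⟨M₀, hM₀⟩ i k x
  have ht₂ : t ∈ Ioc (0 : ℝ) (2 * T) := ⟨ht.1, by linarith [ht.1, ht.2]⟩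
  have hq := hp_int t ht₂
  set g := transitionOp volume (p t) φ
  set ψ := fun z => lineDeriv ℝ g z (EuclideanSpace.single k 1)
  have hg := h1 t ht φ hφ ⟨M₀, hM₀⟩ k
  have hg_meas : Measurable g := measurable_transitionOp (hp_reg t ht₂).continuous.measurable hφ
  have hψ_meas : Measurable ψ :=
    (stronglyMeasurable_lineDeriv_of_lineDifferentiableAt hg_meas.stronglyMeasurable
      fun z => (hg z).1).measurable
  have h_semigroup : (fun z => ∫ y, φ (z + y) * p (2 * t) y) = transitionOp volume (p t) g := by
    have : p (2 * t) = p t ⋆[ContinuousLinearMap.mul ℝ ℝ, volume] p t := funext fun y => by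
      rw [two_mul, hp_conv t t ht.1 ht.1 (by linarith [ht.2]), convolution_def]
      simp only [ContinuousLinearMap.mul_apply', mul_comm]
    rw [this]
    exact transitionOp_convolution hq hq hφ hM₀
  have h_deriv (z) : HasLineDerivAt ℝ (transitionOp volume (p t) g)
      (transitionOp volume (p t) ψ z) z (EuclideanSpace.single k 1) :=
    hasLineDerivAt_transitionOp hq hg_meas
      (abs_transitionOp_le (hp_nonneg t ht₂) hq (hp_one t ht₂) hM₀) (fun z => (hg z).1)
      (fun z => (hg z).2 M₀ hM₀) z
  have h_deriv_eq : (fun z => lineDeriv ℝ (fun w => ∫ y, φ (w + y) * p (2 * t) y) z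
      (EuclideanSpace.single k 1)) = transitionOp volume (p t) ψ :=
    funext fun z => h_semigroup ▸ (h_deriv z).lineDeriv
  have hψ := h1 t ht ψ hψ_meas ⟨c t * M₀, fun z => (hg z).2 M₀ hM₀⟩ i x
  refine ⟨h_semigroup ▸ (h_deriv x).lineDifferentiableAt, h_deriv_eq ▸ hψ.1, fun M hM => ?_⟩
  rw [h_deriv_eq]
  calc _ ≤ c t * (c t * M) := hψ.2 _ fun z => (hg z).2 M hM
    _ = c t ^ 2 * M := by ring

/-- **Lemma 4.1(ii).** Let `(p_t)_{t ∈ (0,2T]}` be `C²` probability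
densities on `ℝ^d` forming a convolution semigroup and `P_t φ(x) = ∫ φ(x+y) p_t(y) dy`.
If `‖∂_{x_i} P_t φ‖_∞ ≤ c(t) ‖φ‖_∞` for all `t ∈ (0,T]`, bounded measurable `φ` and all
`i`, then `∂_{x_i} ∂_{x_k} P_{2t} φ` exists with
`‖∂_{x_i} ∂_{x_k} P_{2t} φ‖_∞ ≤ c(t)² ‖φ‖_∞`. -/
theorem semigroup_second_derivative_estimate
    {d : ℕ} (T : ℝ) (hT : 0 < T)
    (p : ℝ → EuclideanSpace ℝ (Fin d) → ℝ)
    (hp_reg : ∀ t ∈ Set.Ioc (0:ℝ) (2*T), ContDiff ℝ 2 (p t))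
    (hp_nonneg : ∀ t ∈ Set.Ioc (0:ℝ) (2*T), ∀ x, 0 ≤ p t x)
    (hp_int : ∀ t ∈ Set.Ioc (0:ℝ) (2*T), Integrable (p t) volume)
    (hp_one : ∀ t ∈ Set.Ioc (0:ℝ) (2*T), (∫ x, p t x) = 1)
    (hp_conv : ∀ s t : ℝ, 0 < s → 0 < t → s + t ≤ 2*T →
      ∀ x, p (s + t) x = ∫ y, p s (x - y) * p t y)
    (c : ℝ → ℝ) (hc : ∀ t ∈ Set.Ioc (0:ℝ) T, 0 ≤ c t)
    (h1 : ∀ t ∈ Set.Ioc (0:ℝ) T, ∀ φ : EuclideanSpace ℝ (Fin d) → ℝ, Measurable φ →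
      (∃ M : ℝ, ∀ x, |φ x| ≤ M) → ∀ i : Fin d, ∀ x,
        LineDifferentiableAt ℝ (fun z => ∫ y, φ (z + y) * p t y) x
          (EuclideanSpace.single i 1) ∧
        ∀ M : ℝ, (∀ z, |φ z| ≤ M) →
          |lineDeriv ℝ (fun z => ∫ y, φ (z + y) * p t y) x (EuclideanSpace.single i 1)|
            ≤ c t * M) :
    ∀ t ∈ Set.Ioc (0:ℝ) T, ∀ φ : EuclideanSpace ℝ (Fin d) → ℝ, Measurable φ →
      (∃ M : ℝ, ∀ x, |φ x| ≤ M) → ∀ i k : Fin d, ∀ x,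
        LineDifferentiableAt ℝ (fun z => ∫ y, φ (z + y) * p (2*t) y) x
          (EuclideanSpace.single k 1) ∧
        LineDifferentiableAt ℝ
          (fun z => lineDeriv ℝ (fun w => ∫ y, φ (w + y) * p (2*t) y) z
            (EuclideanSpace.single k 1)) x (EuclideanSpace.single i 1) ∧
        ∀ M : ℝ, (∀ z, |φ z| ≤ M) →
          |lineDeriv ℝ
              (fun z => lineDeriv ℝ (fun w => ∫ y, φ (w + y) * p (2*t) y) z
                (EuclideanSpace.single k 1)) x (EuclideanSpace.single i 1)|
            ≤ c t ^ 2 * M :=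
  semigroup_second_derivative_estimate_general T p hp_reg hp_nonneg hp_int hp_one hp_conv c h1
end

section
/- Let (p_t)_{t ∈ (0,2T]} be probability densities on ℝ^d in C²(ℝ^d) satisfying the convolution semigroup property p_{s+t} = p_s ⋆ p_t for s, t, s+t ∈ (0,2T], and let c : (0,T] → [0,∞). If ∫_{ℝ^d} |∂_{x_i} p_t(x)| dx ≤ c(t) for all t ∈ (0,T] and i ∈ {1,…,d}, then ∫_{ℝ^d} |∂_{x_i} ∂_{x_k} p_{2t}(x)| dx ≤ c(t)² for all t ∈ (0,T] and i, k ∈ {1,…,d}. -/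
/-!
Write `Δ_v φ = φ (· + v) - φ`. Since `p_{2t} = p_t ⋆ p_t`, the second difference
`Δ_a Δ_b p_{2t}` is the convolution `Δ_a p_t ⋆ Δ_b p_t`, so by Young's inequality in `L¹`
its `L¹` norm is at most `‖Δ_a p_t‖₁ ‖Δ_b p_t‖₁`; and `‖Δ_{h e} p_t‖₁ ≤ h ‖∂_e p_t‖₁` by the
fundamental theorem of calculus along the segment. Dividing by the step sizes and letting
them tend to zero (Fatou's lemma, once per derivative) gives
`‖∂_i ∂_k p_{2t}‖₁ ≤ ‖∂_i p_t‖₁ ‖∂_k p_t‖₁ ≤ c(t)²`.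
-/

open MeasureTheory Filter Set
open scoped ENNReal Topology

theorem lintegral_enorm_integral_mul_sub_le {G : Type*} [AddGroup G] [MeasurableSpace G]
    [MeasurableAdd₂ G] [MeasurableNeg G] {μ : Measure G} [SFinite μ] [μ.IsAddRightInvariant]
    {u v : G → ℝ} (hu : AEStronglyMeasurable u μ) (hv : AEStronglyMeasurable v μ) :
    ∫⁻ x, ‖∫ y, u (x - y) * v y ∂μ‖ₑ ∂μ ≤ (∫⁻ x, ‖u x‖ₑ ∂μ) * ∫⁻ y, ‖v y‖ₑ ∂μ := by
  have hjoint : AEMeasurable (fun p : G × G => ‖u (p.1 - p.2)‖ₑ * ‖v p.2‖ₑ) (μ.prod μ) := by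
    simpa [enorm_mul, mul_comm] using
      (hv.convolution_integrand (ContinuousLinearMap.mul ℝ ℝ) hu).enorm
  calc ∫⁻ x, ‖∫ y, u (x - y) * v y ∂μ‖ₑ ∂μ
      ≤ ∫⁻ x, ∫⁻ y, ‖u (x - y)‖ₑ * ‖v y‖ₑ ∂μ ∂μ := by
        gcongr with x
        simpa only [enorm_mul] using enorm_integral_le_lintegral_enorm (fun y => u (x - y) * v y)
    _ = ∫⁻ y, ∫⁻ x, ‖u (x - y)‖ₑ * ‖v y‖ₑ ∂μ ∂μ := lintegral_lintegral_swap hjoint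
    _ = ∫⁻ y, (∫⁻ x, ‖u x‖ₑ ∂μ) * ‖v y‖ₑ ∂μ := by
        congr 1 with y
        rw [lintegral_mul_const' _ _ enorm_ne_top, lintegral_sub_right_eq_self (‖u ·‖ₑ)]
    _ = (∫⁻ x, ‖u x‖ₑ ∂μ) * ∫⁻ y, ‖v y‖ₑ ∂μ := lintegral_const_mul'' _ hv.enorm

section SecondDifference

variable {G : Type*} [AddCommGroup G] [MeasurableSpace G] [MeasurableAdd₂ G] [MeasurableNeg G]
  {μ : Measure G} [SFinite μ] [μ.IsAddRightInvariant] {f g P : G → ℝ}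

theorem ae_sub_sub_add_eq_integral_mul (hf : Integrable f μ) (hg : Integrable g μ)
    (hP : ∀ x, P x = ∫ y, f (x - y) * g y ∂μ) (a b : G) :
    ∀ᵐ x ∂μ, P (x + a + b) - P (x + a) - P (x + b) + P x =
      ∫ y, (f (x - y + a) - f (x - y)) * (g (y + b) - g y) ∂μ := by
  have hexists : ∀ᵐ x ∂μ, Integrable (fun y => f (x - y) * g y) μ := by
    simpa [ConvolutionExistsAt, mul_comm] using
      hg.ae_convolution_exists (ContinuousLinearMap.mul ℝ ℝ) hf
  have hshift : ∀ c, ∀ᵐ x ∂μ, Integrable (fun y => f (x - y + c) * g y) μ := fun c => by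
    simpa [add_sub_right_comm] using
      (measurePreserving_add_right μ c).quasiMeasurePreserving.ae hexists
  filter_upwards [hshift 0, hshift a, hshift b, hshift (a + b)] with x h0 ha hb hab
  simp only [add_zero] at h0
  have hPc : ∀ c, P (x + c) = ∫ y, f (x - y + c) * g y ∂μ := fun c => by
    simp_rw [hP, add_sub_right_comm]
  have hPcb : ∀ c, P (x + c + b) = ∫ y, f (x - y + c) * g (y + b) ∂μ := fun c => by
    rw [hP, ← integral_add_right_eq_self _ b]
    congr 1 with y
    congr 2
    abel
  have hPb : P (x + b) = ∫ y, f (x - y) * g (y + b) ∂μ := by simpa using hPcb 0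
  have hab' : Integrable (fun y => f (x - y + a) * g (y + b)) μ := by
    simpa [add_assoc, sub_add_eq_sub_sub] using hab.comp_add_right b
  have hb' : Integrable (fun y => f (x - y) * g (y + b)) μ := by
    simpa [sub_add_eq_sub_sub] using hb.comp_add_right b
  calc P (x + a + b) - P (x + a) - P (x + b) + P x
      = (∫ y, f (x - y + a) * g (y + b) ∂μ - ∫ y, f (x - y) * g (y + b) ∂μ)
          - (∫ y, f (x - y + a) * g y ∂μ - ∫ y, f (x - y) * g y ∂μ) := by
        rw [hPcb, hPc, hPb, hP]; ring
    _ = ∫ y, (f (x - y + a) * g (y + b) - f (x - y) * g (y + b))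
          - (f (x - y + a) * g y - f (x - y) * g y) ∂μ := by
        rw [← integral_sub hab' hb', ← integral_sub ha h0]
        exact (integral_sub (hab'.sub hb') (ha.sub h0)).symm
    _ = ∫ y, (f (x - y + a) - f (x - y)) * (g (y + b) - g y) ∂μ := by
        congr 1 with y; ring

theorem lintegral_enorm_sub_sub_add_le (hf : Integrable f μ) (hg : Integrable g μ)
    (hP : ∀ x, P x = ∫ y, f (x - y) * g y ∂μ) (a b : G) :
    ∫⁻ x, ‖P (x + a + b) - P (x + a) - P (x + b) + P x‖ₑ ∂μ ≤
      (∫⁻ x, ‖f (x + a) - f x‖ₑ ∂μ) * ∫⁻ y, ‖g (y + b) - g y‖ₑ ∂μ := by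
  rw [lintegral_congr_ae ((ae_sub_sub_add_eq_integral_mul hf hg hP a b).mono
    fun x hx => congrArg (‖·‖ₑ) hx)]
  exact lintegral_enorm_integral_mul_sub_le (u := fun z => f (z + a) - f z)
    ((hf.comp_add_right a).sub hf).aestronglyMeasurable
    ((hg.comp_add_right b).sub hg).aestronglyMeasurable

end SecondDifference

theorem lintegral_enorm_fderiv_apply_le {E : Type*} [NormedAddCommGroup E] [NormedSpace ℝ E]
    [MeasurableSpace E] [OpensMeasurableSpace E] {μ : Measure E} {f : E → ℝ}
    (hf : Differentiable ℝ f) (e : E) {C : ℝ≥0∞}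
    (hC : ∀ h : ℝ, 0 < h → ∫⁻ x, ‖f (x + h • e) - f x‖ₑ ∂μ ≤ ENNReal.ofReal h * C) :
    ∫⁻ x, ‖fderiv ℝ f x e‖ₑ ∂μ ≤ C := by
  set q : ℕ → E → ℝ := fun n x => (n : ℝ) * (f (x + (n : ℝ)⁻¹ • e) - f x)
  have hq_lim : ∀ x, Tendsto (fun n => q n x) atTop (𝓝 (fderiv ℝ f x e)) := fun x =>
    (hf x).hasFDerivAt.lim e (by simpa using tendsto_natCast_atTop_atTop (R := ℝ))
  have hq_meas : ∀ n, Measurable fun x => ‖q n x‖ₑ := fun n =>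
    (continuous_const.mul ((hf.continuous.comp (continuous_add_const _)).sub
      hf.continuous)).enorm.measurable
  have hq_bound : ∀ n : ℕ, 0 < n → ∫⁻ x, ‖q n x‖ₑ ∂μ ≤ C := fun n hn => by
    have hn' : (0 : ℝ) < n := Nat.cast_pos.mpr hn
    calc ∫⁻ x, ‖q n x‖ₑ ∂μ = n * ∫⁻ x, ‖f (x + (n : ℝ)⁻¹ • e) - f x‖ₑ ∂μ := by
          simp only [q, enorm_mul, Real.enorm_natCast]
          exact lintegral_const_mul' _ _ (ENNReal.natCast_ne_top n)
      _ ≤ n * (ENNReal.ofReal (n : ℝ)⁻¹ * C) := by gcongr; exact hC _ (inv_pos.mpr hn')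
      _ = C := by
          rw [ENNReal.ofReal_inv_of_pos hn', ENNReal.ofReal_natCast, ← mul_assoc,
            ENNReal.mul_inv_cancel (by exact_mod_cast hn.ne') (ENNReal.natCast_ne_top n), one_mul]
  calc ∫⁻ x, ‖fderiv ℝ f x e‖ₑ ∂μ = ∫⁻ x, liminf (fun n => ‖q n x‖ₑ) atTop ∂μ :=
        lintegral_congr fun x => ((hq_lim x).enorm.liminf_eq).symm
    _ ≤ liminf (fun n => ∫⁻ x, ‖q n x‖ₑ ∂μ) atTop := lintegral_liminf_le hq_meas
    _ ≤ C := liminf_le_of_frequently_le' ((eventually_gt_atTop 0).mono hq_bound).frequently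

section TranslationInvariant

variable {E : Type*} [NormedAddCommGroup E] [NormedSpace ℝ E] [MeasurableSpace E] [BorelSpace E]
  {μ : Measure E} [SFinite μ] [μ.IsAddRightInvariant]

theorem lintegral_enorm_add_smul_sub_le {f : E → ℝ} (hf : ContDiff ℝ 1 f) (e : E) {h : ℝ}
    (hh : 0 ≤ h) :
    ∫⁻ x, ‖f (x + h • e) - f x‖ₑ ∂μ ≤ ENNReal.ofReal h * ∫⁻ x, ‖fderiv ℝ f x e‖ₑ ∂μ := by
  set g : E → ℝ := fun x => fderiv ℝ f x e
  have hg : Continuous g := (hf.continuous_fderiv one_ne_zero).clm_apply continuous_const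
  have hline : ∀ x, Continuous fun s : ℝ => x + s • e := fun x => by fun_prop
  have ftc : ∀ x, f (x + h • e) - f x = ∫ s in Ioc 0 h, g (x + s • e) := fun x => by
    have hderiv : ∀ s ∈ uIcc 0 h, HasDerivAt (fun s : ℝ => f (x + s • e)) (g (x + s • e)) s :=
      fun s _ => (hf.differentiable one_ne_zero _).hasFDerivAt.comp_hasDerivAt s
        (by simpa using ((hasDerivAt_id s).smul_const e).const_add x)
    rw [← intervalIntegral.integral_of_le hh, intervalIntegral.integral_eq_sub_of_hasDerivAt
      hderiv ((hg.comp (hline x)).intervalIntegrable 0 h)]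
    simp
  have hjoint : Measurable fun p : E × ℝ => ‖g (p.1 + p.2 • e)‖ₑ := by
    apply Continuous.measurable; fun_prop
  calc ∫⁻ x, ‖f (x + h • e) - f x‖ₑ ∂μ
      ≤ ∫⁻ x, (∫⁻ s in Ioc (0 : ℝ) h, ‖g (x + s • e)‖ₑ) ∂μ := by
        gcongr with x; rw [ftc x]; exact enorm_integral_le_lintegral_enorm _
    _ = ∫⁻ s in Ioc (0 : ℝ) h, ∫⁻ x, ‖g (x + s • e)‖ₑ ∂μ :=
        lintegral_lintegral_swap hjoint.aemeasurable
    _ = ∫⁻ s in Ioc (0 : ℝ) h, ∫⁻ x, ‖g x‖ₑ ∂μ := by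
        simp_rw [lintegral_add_right_eq_self (fun x => ‖g x‖ₑ)]
    _ = ENNReal.ofReal h * ∫⁻ x, ‖g x‖ₑ ∂μ := by
        rw [setLIntegral_const, Real.volume_Ioc, sub_zero, mul_comm]

variable [SecondCountableTopology E] {f g P : E → ℝ}

theorem lintegral_enorm_fderiv_apply_add_sub_le (hg : ContDiff ℝ 1 g) (hfi : Integrable f μ)
    (hgi : Integrable g μ) (hP : Differentiable ℝ P) (hPfg : ∀ x, P x = ∫ y, f (x - y) * g y ∂μ)
    (v b : E) :
    ∫⁻ x, ‖fderiv ℝ P (x + v) b - fderiv ℝ P x b‖ₑ ∂μ ≤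
      (∫⁻ x, ‖f (x + v) - f x‖ₑ ∂μ) * ∫⁻ x, ‖fderiv ℝ g x b‖ₑ ∂μ := by
  have hderiv : ∀ x, fderiv ℝ (fun x => P (x + v) - P x) x b =
      fderiv ℝ P (x + v) b - fderiv ℝ P x b := fun x => by
    rw [fderiv_fun_sub ((differentiableAt_comp_add_right v).2 (hP _)) (hP x),
      fderiv_comp_add_right]
    rfl
  simp_rw [← hderiv]
  refine lintegral_enorm_fderiv_apply_le ((hP.comp (differentiable_id.add_const v)).sub hP) b
    fun h hh => ?_
  calc ∫⁻ x, ‖P (x + h • b + v) - P (x + h • b) - (P (x + v) - P x)‖ₑ ∂μ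
      = ∫⁻ x, ‖P (x + v + h • b) - P (x + v) - P (x + h • b) + P x‖ₑ ∂μ := by
        congr 1 with x; rw [add_right_comm]; ring_nf
    _ ≤ (∫⁻ x, ‖f (x + v) - f x‖ₑ ∂μ) * ∫⁻ y, ‖g (y + h • b) - g y‖ₑ ∂μ :=
        lintegral_enorm_sub_sub_add_le hfi hgi hPfg v (h • b)
    _ ≤ (∫⁻ x, ‖f (x + v) - f x‖ₑ ∂μ) * (ENNReal.ofReal h * ∫⁻ x, ‖fderiv ℝ g x b‖ₑ ∂μ) := by
        gcongr; exact lintegral_enorm_add_smul_sub_le hg b hh.le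
    _ = _ := by ring

theorem lintegral_enorm_fderiv_fderiv_le (hf : ContDiff ℝ 1 f) (hg : ContDiff ℝ 1 g)
    (hfi : Integrable f μ) (hgi : Integrable g μ) (hP : ContDiff ℝ 2 P)
    (hPfg : ∀ x, P x = ∫ y, f (x - y) * g y ∂μ) (a b : E) :
    ∫⁻ x, ‖fderiv ℝ (fun z => fderiv ℝ P z b) x a‖ₑ ∂μ ≤
      (∫⁻ x, ‖fderiv ℝ f x a‖ₑ ∂μ) * ∫⁻ x, ‖fderiv ℝ g x b‖ₑ ∂μ := by
  refine lintegral_enorm_fderiv_apply_le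
    ((hP.fderiv_right (m := 1) le_rfl).clm_apply contDiff_const |>.differentiable one_ne_zero)
    a fun h hh => ?_
  calc ∫⁻ x, ‖fderiv ℝ P (x + h • a) b - fderiv ℝ P x b‖ₑ ∂μ
      ≤ (∫⁻ x, ‖f (x + h • a) - f x‖ₑ ∂μ) * ∫⁻ x, ‖fderiv ℝ g x b‖ₑ ∂μ :=
        lintegral_enorm_fderiv_apply_add_sub_le hg hfi hgi (hP.differentiable two_ne_zero) hPfg _ _
    _ ≤ ENNReal.ofReal h * (∫⁻ x, ‖fderiv ℝ f x a‖ₑ ∂μ) * ∫⁻ x, ‖fderiv ℝ g x b‖ₑ ∂μ := by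
        gcongr; exact lintegral_enorm_add_smul_sub_le hf a hh.le
    _ = _ := by ring

end TranslationInvariant

theorem second_derivative_density_estimate_general
    {d : ℕ} (T : ℝ)
    (p : ℝ → EuclideanSpace ℝ (Fin d) → ℝ)
    (hp_reg : ∀ t ∈ Set.Ioc (0:ℝ) (2*T), ContDiff ℝ 2 (p t))
    (hp_int : ∀ t ∈ Set.Ioc (0:ℝ) (2*T), Integrable (p t) volume)
    (hp_conv : ∀ s t : ℝ, 0 < s → 0 < t → s + t ≤ 2*T →
      ∀ x, p (s + t) x = ∫ y, p s (x - y) * p t y)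
    (c : ℝ → ℝ)
    (h1 : ∀ t ∈ Set.Ioc (0:ℝ) T, ∀ i : Fin d,
      (∫⁻ x, ENNReal.ofReal |fderiv ℝ (p t) x (EuclideanSpace.single i 1)| ∂volume)
        ≤ ENNReal.ofReal (c t)) :
    ∀ t ∈ Set.Ioc (0:ℝ) T, ∀ i k : Fin d,
      (∫⁻ x, ENNReal.ofReal
          |fderiv ℝ (fun z => fderiv ℝ (p (2*t)) z (EuclideanSpace.single k 1)) x
            (EuclideanSpace.single i 1)| ∂volume)
        ≤ ENNReal.ofReal (c t ^ 2) := by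
  intro t ht i k
  obtain ⟨ht0, htT⟩ := ht
  have ht' : t ∈ Ioc 0 (2 * T) := ⟨ht0, by linarith⟩
  have h2t : 2 * t ∈ Ioc 0 (2 * T) := ⟨by linarith, by linarith⟩
  have hconv : ∀ x, p (2 * t) x = ∫ y, p t (x - y) * p t y := by
    rw [two_mul]; exact hp_conv t t ht0 ht0 (by linarith)
  have hC1 : ContDiff ℝ 1 (p t) := (hp_reg t ht').of_le one_le_two
  simp only [← Real.enorm_eq_ofReal_abs] at h1 ⊢
  calc _ ≤ (∫⁻ x, ‖fderiv ℝ (p t) x (EuclideanSpace.single i 1)‖ₑ) *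
        ∫⁻ x, ‖fderiv ℝ (p t) x (EuclideanSpace.single k 1)‖ₑ :=
        lintegral_enorm_fderiv_fderiv_le hC1 hC1 (hp_int t ht') (hp_int t ht') (hp_reg _ h2t)
          hconv _ _
    _ ≤ ENNReal.ofReal (c t) * ENNReal.ofReal (c t) :=
        mul_le_mul' (h1 t ⟨ht0, htT⟩ i) (h1 t ⟨ht0, htT⟩ k)
    _ ≤ ENNReal.ofReal (c t ^ 2) := by
        rcases le_total 0 (c t) with hc | hc
        · rw [← ENNReal.ofReal_mul hc, sq]
        · simp [ENNReal.ofReal_of_nonpos hc]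

/-- **Lemma 4.1(iii).** Let `(p_t)_{t ∈ (0,2T]}` be `C²` probability
densities on `ℝ^d` forming a convolution semigroup. If `∫ |∂_{x_i} p_t(x)| dx ≤ c(t)`
for all `t ∈ (0,T]` and all `i`, then `∫ |∂_{x_i} ∂_{x_k} p_{2t}(x)| dx ≤ c(t)²` for all
`t ∈ (0,T]` and all `i, k`. -/
theorem second_derivative_density_estimate
    {d : ℕ} (T : ℝ) (hT : 0 < T)
    (p : ℝ → EuclideanSpace ℝ (Fin d) → ℝ)
    (hp_reg : ∀ t ∈ Set.Ioc (0:ℝ) (2*T), ContDiff ℝ 2 (p t))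
    (hp_nonneg : ∀ t ∈ Set.Ioc (0:ℝ) (2*T), ∀ x, 0 ≤ p t x)
    (hp_int : ∀ t ∈ Set.Ioc (0:ℝ) (2*T), Integrable (p t) volume)
    (hp_one : ∀ t ∈ Set.Ioc (0:ℝ) (2*T), (∫ x, p t x) = 1)
    (hp_conv : ∀ s t : ℝ, 0 < s → 0 < t → s + t ≤ 2*T →
      ∀ x, p (s + t) x = ∫ y, p s (x - y) * p t y)
    (c : ℝ → ℝ) (hc : ∀ t ∈ Set.Ioc (0:ℝ) T, 0 ≤ c t)
    (h1 : ∀ t ∈ Set.Ioc (0:ℝ) T, ∀ i : Fin d,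
      (∫⁻ x, ENNReal.ofReal |fderiv ℝ (p t) x (EuclideanSpace.single i 1)| ∂volume)
        ≤ ENNReal.ofReal (c t)) :
    ∀ t ∈ Set.Ioc (0:ℝ) T, ∀ i k : Fin d,
      (∫⁻ x, ENNReal.ofReal
          |fderiv ℝ (fun z => fderiv ℝ (p (2*t)) z (EuclideanSpace.single k 1)) x
            (EuclideanSpace.single i 1)| ∂volume)
        ≤ ENNReal.ofReal (c t ^ 2) :=
  second_derivative_density_estimate_general T p hp_reg hp_int hp_conv c h1
end

section
/- Let μ be a measure on (0,∞) with ∫ min{r,1} μ(dr) < ∞ and define the Bernstein function f(λ) = ∫_{(0,∞)} (1 − e^{−λ r}) μ(dr) for λ ≥ 0. If there exist c > 0 and ρ ∈ (0,1) such that μ(B) ≥ c ∫_B r^{−1−ρ} dr for every Borel set B ⊆ (0,1), then liminf_{λ→∞} f(λ)/λ^ρ > 0. -/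
/-!
For `r > 1/λ` the integrand `1 - e^{-λr}` is at least `1 - e^{-1}`, so
`f(λ) ≥ (1 - e^{-1}) μ(1/λ, ∞) ≥ (1 - e^{-1}) c ∫_{1/λ}^1 r^{-1-ρ} dr = (1 - e^{-1}) c (λ^ρ - 1)/ρ`,
which is at least `(1 - e^{-1}) c λ^ρ / (2ρ)` once `λ^ρ ≥ 2`.
-/

open MeasureTheory Filter Set Real
open scoped ENNReal

lemma one_sub_exp_neg_le_min (x : ℝ) : 1 - exp (-x) ≤ min x 1 := by
  have h₁ := add_one_le_exp (-x)
  have h₂ := exp_pos (-x)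
  exact le_min (by linarith) (by linarith)

lemma min_mul_one_le_max_mul_min {l r : ℝ} (hr : 0 ≤ r) :
    min (l * r) 1 ≤ max l 1 * min r 1 := by
  rcases le_total r 1 with h | h
  · rw [min_eq_left h]
    exact (min_le_left _ _).trans (mul_le_mul_of_nonneg_right (le_max_left _ _) hr)
  · rw [min_eq_right h, mul_one]
    exact (min_le_right _ _).trans (le_max_right _ _)

lemma integral_Ioo_rpow_neg_one_sub {a b ρ : ℝ} (ha : 0 < a) (hab : a ≤ b) (hρ : ρ ≠ 0) :
    ∫ r in Ioo a b, r ^ (-1 - ρ) = (a ^ (-ρ) - b ^ (-ρ)) / ρ := by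
  have h0 : (0 : ℝ) ∉ uIcc a b := by
    rw [uIcc_of_le hab]; exact fun h => ha.not_ge h.1
  rw [← integral_Ioc_eq_integral_Ioo, ← intervalIntegral.integral_of_le hab,
    integral_rpow (Or.inr ⟨by contrapose! hρ; linarith, h0⟩)]
  rw [show -1 - ρ + 1 = -ρ by ring, div_neg, ← neg_div, neg_sub]

lemma lintegral_Ioo_rpow_neg_one_sub {a b ρ : ℝ} (ha : 0 < a) (hab : a ≤ b) (hρ : ρ ≠ 0) :
    ∫⁻ r in Ioo a b, ENNReal.ofReal (r ^ (-1 - ρ)) = ENNReal.ofReal ((a ^ (-ρ) - b ^ (-ρ)) / ρ) := by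
  have h0 : (0 : ℝ) ∉ uIcc a b := by
    rw [uIcc_of_le hab]; exact fun h => ha.not_ge h.1
  have hint : IntegrableOn (fun r : ℝ => r ^ (-1 - ρ)) (Ioo a b) :=
    ((intervalIntegral.intervalIntegrable_rpow (Or.inr h0)).1).mono_set Ioo_subset_Ioc_self
  have hnonneg : 0 ≤ᵐ[volume.restrict (Ioo a b)] fun r : ℝ => r ^ (-1 - ρ) :=
    (ae_restrict_iff' measurableSet_Ioo).2
      (ae_of_all _ fun r hr => rpow_nonneg (ha.trans hr.1).le _)
  rw [← ofReal_integral_eq_lintegral_ofReal hint hnonneg, integral_Ioo_rpow_neg_one_sub ha hab hρ]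

section LevyMeasure

variable {μ : Measure ℝ}

lemma integrable_min_one (hpos : ∀ᵐ r ∂μ, 0 ≤ r)
    (hμint : ∫⁻ r, ENNReal.ofReal (min r 1) ∂μ < ∞) : Integrable (fun r => min r 1) μ :=
  ⟨(continuous_id.min continuous_const).aestronglyMeasurable,
    (hasFiniteIntegral_iff_ofReal (hpos.mono fun _ hr => le_min hr zero_le_one)).2 hμint⟩

lemma integrable_one_sub_exp_neg_mul (hpos : ∀ᵐ r ∂μ, 0 ≤ r)
    (hμint : ∫⁻ r, ENNReal.ofReal (min r 1) ∂μ < ∞) {l : ℝ} (hl : 0 ≤ l) :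
    Integrable (fun r => 1 - exp (-(l * r))) μ := by
  refine ((integrable_min_one hpos hμint).const_mul (max l 1)).mono' (by fun_prop) ?_
  filter_upwards [hpos] with r hr
  have hlr : 0 ≤ l * r := mul_nonneg hl hr
  rw [Real.norm_of_nonneg (by linarith [exp_le_one_iff.2 (neg_nonpos.2 hlr)])]
  exact (one_sub_exp_neg_le_min _).trans (min_mul_one_le_max_mul_min hr)

lemma measure_Ioi_lt_top (hpos : ∀ᵐ r ∂μ, 0 ≤ r)
    (hμint : ∫⁻ r, ENNReal.ofReal (min r 1) ∂μ < ∞) {a : ℝ} (ha : 0 < a) : μ (Ioi a) < ∞ := by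
  refine (measure_mono fun r (hr : a < r) => ?_).trans_lt
    ((integrable_min_one hpos hμint).measure_ge_lt_top (lt_min ha zero_lt_one))
  exact min_le_min_right 1 hr.le

lemma measureReal_Ioi_inv_mul_le_integral (hpos : ∀ᵐ r ∂μ, 0 ≤ r)
    (hμint : ∫⁻ r, ENNReal.ofReal (min r 1) ∂μ < ∞) {l : ℝ} (hl : 0 < l) :
    μ.real (Ioi l⁻¹) * (1 - exp (-1)) ≤ ∫ r, 1 - exp (-(l * r)) ∂μ := by
  rw [← smul_eq_mul, ← integral_indicator_const _ measurableSet_Ioi]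
  refine integral_mono_ae ((integrable_indicator_iff measurableSet_Ioi).2
      (integrableOn_const (measure_Ioi_lt_top hpos hμint (inv_pos.2 hl)).ne))
    (integrable_one_sub_exp_neg_mul hpos hμint hl.le) ?_
  filter_upwards [hpos] with r hr
  by_cases hrS : r ∈ Ioi l⁻¹
  · have hlr : 1 ≤ l * r := by
      rw [← inv_mul_le_iff₀ hl, mul_one]; exact le_of_lt hrS
    rw [indicator_of_mem hrS]
    linarith [exp_le_exp.2 (neg_le_neg hlr)]
  · rw [indicator_of_notMem hrS]
    linarith [exp_le_one_iff.2 (neg_nonpos.2 (mul_nonneg hl.le hr))]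

end LevyMeasure

/-- **Lemma 5.1(i).** If the Lévy measure `μ` of the Bernstein function
`f(λ) = ∫ (1 - e^{-λr}) μ(dr)` dominates `c r^{-1-ρ} dr` on `(0,1)` for some `ρ ∈ (0,1)`,
then `liminf_{λ→∞} f(λ)/λ^ρ > 0`. -/
theorem bernstein_lower_bound
    (μ : Measure ℝ) (hμsupp : μ (Set.Iic 0) = 0)
    (hμint : (∫⁻ r, ENNReal.ofReal (min r 1) ∂μ) < ∞)
    (c ρ : ℝ) (hc : 0 < c) (hρ : ρ ∈ Set.Ioo (0:ℝ) 1)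
    (hdom : ∀ B : Set ℝ, MeasurableSet B → B ⊆ Set.Ioo (0:ℝ) 1 →
      ENNReal.ofReal c * (∫⁻ r in B, ENNReal.ofReal (r ^ (-1 - ρ))) ≤ μ B) :
    ∃ ε > 0, ∀ᶠ l in Filter.atTop,
      ε ≤ (∫ r, (1 - Real.exp (-(l * r))) ∂μ) / l ^ ρ := by
  have hρ0 : 0 < ρ := hρ.1
  have hpos : ∀ᵐ r ∂μ, 0 ≤ r :=
    measure_mono_null (fun r (hr : ¬ 0 ≤ r) => (not_le.1 hr).le) hμsupp
  have he : 0 < 1 - exp (-1) := sub_pos.2 (exp_lt_one_iff.2 (by norm_num))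
  refine ⟨(1 - exp (-1)) * c / (2 * ρ), by positivity, ?_⟩
  filter_upwards [eventually_ge_atTop 1, (tendsto_rpow_atTop hρ0).eventually_ge_atTop 2]
    with l hl1 hl2
  have hl0 : 0 < l := zero_lt_one.trans_le hl1
  have hinv : l⁻¹ ≤ 1 := inv_le_one_of_one_le₀ hl1
  have hmeasure : c * ((l ^ ρ - 1) / ρ) ≤ μ.real (Ioi l⁻¹) := by
    have hdomS := (hdom (Ioo l⁻¹ 1) measurableSet_Ioo
      (Ioo_subset_Ioo_left (inv_nonneg.2 hl0.le))).trans (measure_mono Ioo_subset_Ioi_self)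
    rwa [lintegral_Ioo_rpow_neg_one_sub (inv_pos.2 hl0) hinv hρ0.ne', inv_rpow hl0.le,
      rpow_neg hl0.le, inv_inv, one_rpow, ← ENNReal.ofReal_mul hc.le,
      ENNReal.ofReal_le_iff_le_toReal (measure_Ioi_lt_top hpos hμint (inv_pos.2 hl0)).ne] at hdomS
  rw [le_div_iff₀ (by positivity)]
  calc (1 - exp (-1)) * c / (2 * ρ) * l ^ ρ
      = (1 - exp (-1)) * (c * (l ^ ρ / 2 / ρ)) := by ring
    _ ≤ (1 - exp (-1)) * (c * ((l ^ ρ - 1) / ρ)) := by gcongr; linarith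
    _ ≤ μ.real (Ioi l⁻¹) * (1 - exp (-1)) := by rw [mul_comm]; gcongr
    _ ≤ ∫ r, 1 - exp (-(l * r)) ∂μ := measureReal_Ioi_inv_mul_le_integral hpos hμint hl0
end

section
/- Let ν be a Lévy measure on ℝ^d ∖ {0}, i.e. ∫ min{|y|², 1} ν(dy) < ∞, and let Re ψ(ξ) := ∫_{y≠0} (1 − cos(ξ·y)) ν(dy). If there exist c > 0 and α ∈ (0,2) such that Re ψ(ξ) ≤ c |ξ|^α for all |ξ| ≤ 1, then ∫_{|y|≥1} |y|^{α−ε} ν(dy) < ∞ for every ε > 0. -/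
/-!
Averaging `1 - cos (s t)` over `s ∈ (0, r]` gives at least `1/2` as soon as `|t| ≥ 2/r`. By Tonelli,
the bound `Re ψ(s θ) ≤ c s^α` for a unit vector `θ` and `s ≤ r` therefore yields
`ν {|⟪θ, y⟫| ≥ 2/r} ≤ 2 c r^α`. Covering `{‖y‖ ≥ R}` by the `d` slabs `|y_i| ≥ R/√d` gives the tail
bound `ν {‖y‖ ≥ R} = O(R^{-α})`, and summing it over the dyadic shells `2^k ≤ ‖y‖ < 2^{k+1}` bounds
`∫_{‖y‖ ≥ 1} ‖y‖^β dν` by a geometric series of ratio `2^{β-α}` whenever `0 ≤ β < α`.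
-/

open MeasureTheory Set
open scoped ENNReal RealInnerProductSpace

theorem integral_one_sub_cos_mul {r t : ℝ} (ht : t ≠ 0) :
    ∫ s in 0..r, (1 - Real.cos (s * t)) = r - Real.sin (r * t) / t := by
  rw [intervalIntegral.integral_sub intervalIntegrable_const
    ((by fun_prop : Continuous fun s ↦ Real.cos (s * t)).intervalIntegrable _ _),
    intervalIntegral.integral_comp_mul_right Real.cos ht, integral_cos]
  simp [div_eq_inv_mul]

theorem half_le_setLIntegral_one_sub_cos_mul {r t : ℝ} (hr : 0 < r) (ht : 2 / r ≤ |t|) :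
    ENNReal.ofReal (r / 2) ≤ ∫⁻ s in Ioc 0 r, ENNReal.ofReal (1 - Real.cos (s * t)) := by
  have ht_pos : 0 < |t| := (by positivity : 0 < 2 / r).trans_le ht
  rw [← ofReal_integral_eq_lintegral_ofReal (by fun_prop : Continuous _).integrableOn_Ioc
    (ae_of_all _ fun s ↦ sub_nonneg.2 (Real.cos_le_one _)), ← intervalIntegral.integral_of_le hr.le,
    integral_one_sub_cos_mul (abs_pos.1 ht_pos)]
  refine ENNReal.ofReal_le_ofReal ?_
  have : |Real.sin (r * t) / t| ≤ r / 2 := calc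
    |Real.sin (r * t) / t| ≤ 1 / |t| := by
      rw [abs_div]; gcongr; exact Real.abs_sin_le_one _
    _ ≤ 1 / (2 / r) := one_div_le_one_div_of_le (by positivity) ht
    _ = r / 2 := by field_simp
  linarith [le_abs_self (Real.sin (r * t) / t)]

theorem measure_two_div_le_abs_le_of_lintegral_one_sub_cos_le {X : Type*} [MeasurableSpace X]
    (μ : Measure X) [SFinite μ] {g : X → ℝ} (hg : Measurable g) {r : ℝ} (hr : 0 < r)
    {K : ℝ≥0∞} (hK : ∀ s ∈ Ioc 0 r, ∫⁻ x, ENNReal.ofReal (1 - Real.cos (s * g x)) ∂μ ≤ K) :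
    μ {x | 2 / r ≤ |g x|} ≤ 2 * K := by
  set B := {x | 2 / r ≤ |g x|}
  have hB : MeasurableSet B := measurableSet_le measurable_const hg.abs
  have hF : Measurable (Function.uncurry fun (x : X) (s : ℝ) ↦
      ENNReal.ofReal (1 - Real.cos (s * g x))) := by fun_prop
  have key : ENNReal.ofReal (r / 2) * μ B ≤ ENNReal.ofReal (r / 2) * (2 * K) := calc
    ENNReal.ofReal (r / 2) * μ B = ∫⁻ _ in B, ENNReal.ofReal (r / 2) ∂μ := by
      rw [setLIntegral_const, mul_comm]
    _ ≤ ∫⁻ x in B, (∫⁻ s in Ioc 0 r, ENNReal.ofReal (1 - Real.cos (s * g x))) ∂μ :=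
      setLIntegral_mono' hB fun x hx ↦ half_le_setLIntegral_one_sub_cos_mul hr hx
    _ ≤ ∫⁻ x, (∫⁻ s in Ioc 0 r, ENNReal.ofReal (1 - Real.cos (s * g x))) ∂μ :=
      setLIntegral_le_lintegral _ _
    _ = ∫⁻ s in Ioc 0 r, ∫⁻ x, ENNReal.ofReal (1 - Real.cos (s * g x)) ∂μ :=
      lintegral_lintegral_swap hF.aemeasurable
    _ ≤ ∫⁻ _ in Ioc 0 r, K := setLIntegral_mono' measurableSet_Ioc hK
    _ = ENNReal.ofReal (r / 2) * (2 * K) := by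
      rw [setLIntegral_const, Real.volume_Ioc, sub_zero, ← mul_assoc, ← ENNReal.ofReal_ofNat 2,
        ← ENNReal.ofReal_mul (by positivity), div_mul_cancel₀ r two_ne_zero, mul_comm]
  exact (ENNReal.mul_le_mul_iff_right (by simp [hr]) ENNReal.ofReal_ne_top).1 key

section InnerProductSpace

variable {E : Type*} [NormedAddCommGroup E] [InnerProductSpace ℝ E]

theorem OrthonormalBasis.exists_div_sqrt_card_le_abs_inner {ι : Type*} [Fintype ι]
    (b : OrthonormalBasis ι ℝ E) {R : ℝ} (hR : 0 < R) {x : E} (hx : R ≤ ‖x‖) :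
    ∃ i, R / √(Fintype.card ι) ≤ |⟪b i, x⟫| := by
  have hx_le := b.norm_le_card_mul_iSup_norm_inner x
  cases isEmpty_or_nonempty ι with
  | inl _ =>
    rw [Fintype.card_of_isEmpty, Nat.cast_zero, Real.sqrt_zero, zero_mul] at hx_le
    exact absurd (hx.trans hx_le) hR.not_ge
  | inr _ =>
    obtain ⟨i, hi⟩ := exists_eq_ciSup_of_finite (f := fun i ↦ ‖⟪b i, x⟫‖)
    refine ⟨i, div_le_of_le_mul₀ (by positivity) (abs_nonneg _) ?_⟩
    rw [← Real.norm_eq_abs, hi]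
    exact hx.trans (hx_le.trans_eq (mul_comm _ _))

variable [MeasurableSpace E] [BorelSpace E]

theorem measure_two_div_le_abs_inner_le (μ : Measure E) [SFinite μ] {c α : ℝ} (hc : 0 ≤ c)
    (hα : 0 ≤ α)
    (hψ : ∀ ξ : E, ‖ξ‖ ≤ 1 →
      (∫⁻ y, ENNReal.ofReal (1 - Real.cos ⟪ξ, y⟫) ∂μ) ≤ ENNReal.ofReal (c * ‖ξ‖ ^ α))
    {θ : E} (hθ : ‖θ‖ = 1) {r : ℝ} (hr : 0 < r) (hr1 : r ≤ 1) :
    μ {y | 2 / r ≤ |⟪θ, y⟫|} ≤ ENNReal.ofReal (2 * c * r ^ α) := by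
  rw [mul_assoc, ENNReal.ofReal_mul zero_le_two, ENNReal.ofReal_ofNat]
  refine measure_two_div_le_abs_le_of_lintegral_one_sub_cos_le μ (by fun_prop) hr
    fun s hs ↦ ?_
  have hnorm : ‖s • θ‖ = s := by rw [norm_smul, hθ, mul_one, Real.norm_of_nonneg hs.1.le]
  simp_rw [← real_inner_smul_left]
  refine (hψ (s • θ) (hnorm.trans_le (hs.2.trans hr1))).trans (ENNReal.ofReal_le_ofReal ?_)
  rw [hnorm]
  gcongr
  exacts [hs.1.le, hs.2]

theorem exists_measure_le_norm_le_rpow_neg [FiniteDimensional ℝ E] (μ : Measure E)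
    [IsFiniteMeasure μ] {c α : ℝ} (hc : 0 ≤ c) (hα : 0 ≤ α)
    (hψ : ∀ ξ : E, ‖ξ‖ ≤ 1 →
      (∫⁻ y, ENNReal.ofReal (1 - Real.cos ⟪ξ, y⟫) ∂μ) ≤ ENNReal.ofReal (c * ‖ξ‖ ^ α)) :
    ∃ C, ∀ R > 0, μ {y | R ≤ ‖y‖} ≤ ENNReal.ofReal (C * R ^ (-α)) := by
  set n := Module.finrank ℝ E
  set b := stdOrthonormalBasis ℝ E
  set D := 2 * √n
  set M := μ.real univ
  refine ⟨(2 * c * n + M) * D ^ α, fun R hR ↦ ?_⟩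
  have hDR_rpow : D ^ α * R ^ (-α) = (D / R) ^ α := by
    rw [Real.div_rpow (by positivity) hR.le, Real.rpow_neg hR.le, div_eq_mul_inv]
  rw [mul_assoc, hDR_rpow]
  rcases le_or_gt R D with hRD | hDR
  · have h_one_le : 1 ≤ (D / R) ^ α := Real.one_le_rpow ((one_le_div hR).2 hRD) hα
    calc μ {y | R ≤ ‖y‖} ≤ μ univ := measure_mono (subset_univ _)
      _ = ENNReal.ofReal M := (ENNReal.ofReal_toReal (measure_ne_top μ univ)).symm
      _ ≤ ENNReal.ofReal ((2 * c * n + M) * (D / R) ^ α) := by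
        refine ENNReal.ofReal_le_ofReal ?_
        have : 0 ≤ M := measureReal_nonneg
        nlinarith [(by positivity : 0 ≤ 2 * c * n)]
  · have h_dir (i : Fin n) :
        μ {y | R / √n ≤ |⟪b i, y⟫|} ≤ ENNReal.ofReal (2 * c * (D / R) ^ α) := by
      have hn : (0 : ℝ) < n := Nat.cast_pos.2 i.pos
      have h_two_div : 2 / (D / R) = R / √n := by simp only [D]; field_simp
      rw [← h_two_div]
      exact measure_two_div_le_abs_inner_le μ hc hα hψ (b.orthonormal.1 i) (by positivity)
        ((div_le_one hR).2 hDR.le)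
    calc μ {y | R ≤ ‖y‖} ≤ μ (⋃ i, {y | R / √n ≤ |⟪b i, y⟫|}) := by
          refine measure_mono fun y hy ↦ mem_iUnion.2 ?_
          simpa using b.exists_div_sqrt_card_le_abs_inner hR hy
      _ ≤ ∑ i, μ {y | R / √n ≤ |⟪b i, y⟫|} := measure_iUnion_fintype_le _ _
      _ ≤ ∑ _ : Fin n, ENNReal.ofReal (2 * c * (D / R) ^ α) := Finset.sum_le_sum fun i _ ↦ h_dir i
      _ = ENNReal.ofReal (n * (2 * c * (D / R) ^ α)) := by
        rw [Finset.sum_const, Finset.card_univ, Fintype.card_fin, nsmul_eq_mul,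
          ENNReal.ofReal_mul (Nat.cast_nonneg n), ENNReal.ofReal_natCast]
      _ ≤ ENNReal.ofReal ((2 * c * n + M) * (D / R) ^ α) := by
        refine ENNReal.ofReal_le_ofReal ?_
        have : 0 ≤ M * (D / R) ^ α := mul_nonneg measureReal_nonneg (by positivity)
        nlinarith

end InnerProductSpace

theorem setLIntegral_rpow_lt_top_of_measure_le_rpow_neg {X : Type*} [MeasurableSpace X]
    (μ : Measure X) {f : X → ℝ} (hf : Measurable f) {α β C : ℝ} (hβ : 0 ≤ β) (hβα : β < α)
    (htail : ∀ R ≥ 1, μ {x | R ≤ f x} ≤ ENNReal.ofReal (C * R ^ (-α))) :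
    ∫⁻ x in {x | 1 ≤ f x}, ENNReal.ofReal (f x ^ β) ∂μ < ∞ := by
  set A : ℕ → Set X := fun k ↦ {x | (2 : ℝ) ^ k ≤ f x ∧ f x < 2 ^ (k + 1)}
  set q : ℝ := 2 ^ (β - α)
  have hq : q < 1 := Real.rpow_lt_one_of_one_lt_of_neg one_lt_two (by linarith)
  have hcover : {x | 1 ≤ f x} ⊆ ⋃ k, A k := fun x hx ↦
    mem_iUnion.2 (exists_nat_pow_near hx one_lt_two)
  have hpiece (k : ℕ) : ∫⁻ x in A k, ENNReal.ofReal (f x ^ β) ∂μ ≤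
      ENNReal.ofReal (C * 2 ^ β) * ENNReal.ofReal q ^ k := calc
    _ ≤ ∫⁻ _ in A k, ENNReal.ofReal (((2 : ℝ) ^ (k + 1)) ^ β) ∂μ := by
      refine setLIntegral_mono' ((measurableSet_le measurable_const hf).inter
        (measurableSet_lt hf measurable_const)) fun x hx ↦ ENNReal.ofReal_le_ofReal ?_
      exact Real.rpow_le_rpow ((by positivity : (0 : ℝ) ≤ 2 ^ k).trans hx.1) hx.2.le hβ
    _ = ENNReal.ofReal (((2 : ℝ) ^ (k + 1)) ^ β) * μ (A k) := setLIntegral_const _ _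
    _ ≤ ENNReal.ofReal (((2 : ℝ) ^ (k + 1)) ^ β) * ENNReal.ofReal (C * ((2 : ℝ) ^ k) ^ (-α)) := by
      gcongr
      exact (measure_mono fun x hx ↦ hx.1).trans (htail _ (one_le_pow₀ one_le_two))
    _ = ENNReal.ofReal (C * 2 ^ β * q ^ k) := by
      rw [← ENNReal.ofReal_mul (by positivity), ← Real.rpow_pow_comm zero_le_two,
        ← Real.rpow_pow_comm zero_le_two,
        show q = 2 ^ β * 2 ^ (-α) by rw [← Real.rpow_add two_pos, ← sub_eq_add_neg], mul_pow]
      congr 1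
      ring
    _ = ENNReal.ofReal (C * 2 ^ β) * ENNReal.ofReal q ^ k := by
      rw [ENNReal.ofReal_mul' (by positivity), ENNReal.ofReal_pow (by positivity)]
  calc ∫⁻ x in {x | 1 ≤ f x}, ENNReal.ofReal (f x ^ β) ∂μ
      ≤ ∫⁻ x in ⋃ k, A k, ENNReal.ofReal (f x ^ β) ∂μ := lintegral_mono_set hcover
    _ ≤ ∑' k, ∫⁻ x in A k, ENNReal.ofReal (f x ^ β) ∂μ := lintegral_iUnion_le _ _
    _ ≤ ∑' k, ENNReal.ofReal (C * 2 ^ β) * ENNReal.ofReal q ^ k := ENNReal.tsum_le_tsum hpiece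
    _ = ENNReal.ofReal (C * 2 ^ β) * (1 - ENNReal.ofReal q)⁻¹ := by
      rw [ENNReal.tsum_mul_left, ENNReal.tsum_geometric]
    _ < ∞ := ENNReal.mul_lt_top ENNReal.ofReal_lt_top
      (ENNReal.inv_lt_top.2 (tsub_pos_of_lt (ENNReal.ofReal_lt_one.2 hq)))

theorem levy_measure_moment_at_infinity_general
    {d : ℕ} (ν : Measure (EuclideanSpace ℝ (Fin d)))
    (hνint : (∫⁻ y, ENNReal.ofReal (min (‖y‖ ^ 2) 1) ∂ν) < ∞)
    (c α : ℝ) (hc : 0 < c) (hα : α ∈ Set.Ioo (0:ℝ) 2)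
    (hψ : ∀ ξ : EuclideanSpace ℝ (Fin d), ‖ξ‖ ≤ 1 →
      (∫⁻ y, ENNReal.ofReal (1 - Real.cos ⟪ξ, y⟫) ∂ν) ≤ ENNReal.ofReal (c * ‖ξ‖ ^ α))
    (ε : ℝ) (hε : 0 < ε) :
    (∫⁻ y in {y : EuclideanSpace ℝ (Fin d) | 1 ≤ ‖y‖},
      ENNReal.ofReal (‖y‖ ^ (α - ε)) ∂ν) < ∞ := by
  set S := {y : EuclideanSpace ℝ (Fin d) | 1 ≤ ‖y‖}
  have hS : ν S < ∞ := calc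
    ν S = ∫⁻ y in S, ENNReal.ofReal (min (‖y‖ ^ 2) 1) ∂ν := by
      rw [← setLIntegral_one]
      refine setLIntegral_congr_fun (measurableSet_le measurable_const measurable_norm)
        fun y hy ↦ ?_
      rw [min_eq_right (one_le_pow₀ hy), ENNReal.ofReal_one]
    _ ≤ _ := setLIntegral_le_lintegral _ _
    _ < ∞ := hνint
  -- Tonelli needs an s-finite measure; on `S` the Lévy measure is finite.
  have : IsFiniteMeasure (ν.restrict S) := isFiniteMeasure_restrict.2 hS.ne
  obtain ⟨C, hC⟩ := exists_measure_le_norm_le_rpow_neg (ν.restrict S) hc.le hα.1.le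
    fun ξ hξ ↦ (setLIntegral_le_lintegral _ _).trans (hψ ξ hξ)
  have htail (R : ℝ) (hR : 1 ≤ R) : ν {y | R ≤ ‖y‖} ≤ ENNReal.ofReal (C * R ^ (-α)) := by
    have hsub : {y | R ≤ ‖y‖} ⊆ S := fun y hy ↦ hR.trans hy
    rw [← Measure.restrict_eq_self ν hsub]
    exact hC R (one_pos.trans_le hR)
  calc ∫⁻ y in S, ENNReal.ofReal (‖y‖ ^ (α - ε)) ∂ν
      ≤ ∫⁻ y in S, ENNReal.ofReal (‖y‖ ^ max (α - ε) 0) ∂ν :=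
        setLIntegral_mono' (measurableSet_le measurable_const measurable_norm) fun y hy ↦
          ENNReal.ofReal_le_ofReal (Real.rpow_le_rpow_of_exponent_le hy (le_max_left _ _))
    _ < ∞ := setLIntegral_rpow_lt_top_of_measure_le_rpow_neg ν measurable_norm (le_max_right _ _)
        (max_lt (by linarith) hα.1) htail

/-- **Lemma 5.1(iii)(b).** Let `ν` be a Lévy measure on `ℝ^d ∖ {0}` and
`Re ψ(ξ) = ∫ (1 - cos(ξ·y)) ν(dy)`. If `Re ψ(ξ) ≤ c |ξ|^α` for all `|ξ| ≤ 1` with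
`α ∈ (0,2)`, then `∫_{|y|≥1} |y|^{α-ε} ν(dy) < ∞` for every `ε > 0`. -/
theorem levy_measure_moment_at_infinity
    {d : ℕ} (ν : Measure (EuclideanSpace ℝ (Fin d))) (hν₀ : ν {0} = 0)
    (hνint : (∫⁻ y, ENNReal.ofReal (min (‖y‖ ^ 2) 1) ∂ν) < ∞)
    (c α : ℝ) (hc : 0 < c) (hα : α ∈ Set.Ioo (0:ℝ) 2)
    (hψ : ∀ ξ : EuclideanSpace ℝ (Fin d), ‖ξ‖ ≤ 1 →
      (∫⁻ y, ENNReal.ofReal (1 - Real.cos ⟪ξ, y⟫) ∂ν) ≤ ENNReal.ofReal (c * ‖ξ‖ ^ α))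
    (ε : ℝ) (hε : 0 < ε) :
    (∫⁻ y in {y : EuclideanSpace ℝ (Fin d) | 1 ≤ ‖y‖},
      ENNReal.ofReal (‖y‖ ^ (α - ε)) ∂ν) < ∞ :=
  levy_measure_moment_at_infinity_general ν hνint c α hc hα hψ ε hε
end

section
/- Let (X, 𝓐, μ) be a σ-finite measure space, a < b, and φ : (a,b) × X → ℝ a measurable function such that: (i) ∫_X |φ(s,x)| μ(dx) < ∞ for all s ∈ (a,b); (ii) s ↦ φ(s,x) is differentiable for every x ∈ X and ∫_{(a,b)} ∫_X |∂_s φ(s,x)| μ(dx) ds < ∞; (iii) s ↦ ∫_X ∂_s φ(s,x) μ(dx) is continuous on (a,b). Then F(s) := ∫_X φ(s,x) μ(dx) is continuously differentiable on (a,b) with F′(s) = ∫_X ∂_s φ(s,x) μ(dx) for all s ∈ (a,b). -/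
open MeasureTheory Filter Set
open scoped ENNReal Topology

noncomputable section

/-- **Proposition A.1, differentiation lemma.** Let `(X, 𝓐, μ)` be a
σ-finite measure space and `φ : (a,b) × X → ℝ` measurable with: (i) `φ(s,·)` integrable
for each `s ∈ (a,b)`; (ii) `s ↦ φ(s,x)` differentiable for each `x` with
`∫_(a,b) ∫_X |∂_s φ(s,x)| μ(dx) ds < ∞`; (iii) `s ↦ ∫_X ∂_s φ(s,x) μ(dx)` continuous.
Then `F(s) = ∫_X φ(s,x) μ(dx)` is continuously differentiable on `(a,b)` with
`F'(s) = ∫_X ∂_s φ(s,x) μ(dx)`. -/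
theorem differentiation_lemma
    {X : Type*} [MeasurableSpace X] (μ : Measure X) [SigmaFinite μ]
    (a b : ℝ) (hab : a < b) (φ : ℝ → X → ℝ)
    (hmeas : Measurable fun q : ℝ × X => φ q.1 q.2)
    (h1 : ∀ s ∈ Set.Ioo a b, Integrable (φ s) μ)
    (h2diff : ∀ x : X, ∀ s ∈ Set.Ioo a b, DifferentiableAt ℝ (fun s' => φ s' x) s)
    (h2int : (∫⁻ s in Set.Ioo a b,
      ∫⁻ x, ENNReal.ofReal |deriv (fun s' => φ s' x) s| ∂μ) < ∞)
    (h3 : ContinuousOn (fun s => ∫ x, deriv (fun s' => φ s' x) s ∂μ) (Set.Ioo a b)) :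
    ∀ s ∈ Set.Ioo a b,
      HasDerivAt (fun s' => ∫ x, φ s' x ∂μ)
        (∫ x, deriv (fun s' => φ s' x) s ∂μ) s ∧
      ContinuousOn (deriv fun s' => ∫ x, φ s' x ∂μ) (Set.Ioo a b) := by
  set ψ : ℝ → X → ℝ := fun t x => deriv (fun s' => φ s' x) t with hψ
  set G : ℝ → ℝ := fun t => ∫ x, ψ t x ∂μ with hG
  set F : ℝ → ℝ := fun s => ∫ x, φ s x ∂μ with hF
  have hasD : ∀ x : X, ∀ t ∈ Set.Ioo a b, HasDerivAt (fun s' => φ s' x) (ψ t x) t :=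
    fun x t ht => (h2diff x t ht).hasDerivAt
  -- joint a.e.-measurability of ψ on (Ioo a b) × X
  have hgn : ∀ n : ℕ, Measurable fun q : ℝ × X =>
      (φ (q.1 + 1 / (n + 1 : ℝ)) q.2 - φ q.1 q.2) / (1 / (n + 1 : ℝ)) := by
    intro n
    exact ((hmeas.comp ((measurable_fst.add_const _).prodMk measurable_snd)).sub
      hmeas).div_const _
  have hnull : (((volume : Measure ℝ).restrict (Set.Ioo a b)).prod μ)
      {q : ℝ × X | q.1 ∉ Set.Ioo a b} = 0 := by
    have hsub : {q : ℝ × X | q.1 ∉ Set.Ioo a b} ⊆ (Set.Ioo a b)ᶜ ×ˢ Set.univ := by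
      intro q hq; exact ⟨hq, trivial⟩
    refine measure_mono_null hsub ?_
    rw [Measure.prod_prod, Measure.restrict_apply (measurableSet_Ioo.compl)]
    simp
  have haemeas : AEMeasurable (fun q : ℝ × X => ψ q.1 q.2)
      (((volume : Measure ℝ).restrict (Set.Ioo a b)).prod μ) := by
    refine aemeasurable_of_tendsto_metrizable_ae atTop
      (fun n => (hgn n).aemeasurable) ?_
    have h0 : ∀ᵐ q : ℝ × X ∂(((volume : Measure ℝ).restrict (Set.Ioo a b)).prod μ),
        q.1 ∈ Set.Ioo a b := hnull
    filter_upwards [h0] with q hq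
    have hd := hasD q.2 q.1 hq
    have hslope := hasDerivAt_iff_tendsto_slope.mp hd
    have ht : Tendsto (fun n : ℕ => q.1 + 1 / (n + 1 : ℝ)) atTop (𝓝[≠] q.1) := by
      rw [tendsto_nhdsWithin_iff]
      constructor
      · have : Tendsto (fun n : ℕ => 1 / (n + 1 : ℝ)) atTop (𝓝 0) :=
          tendsto_one_div_add_atTop_nhds_zero_nat
        have := this.const_add q.1
        simpa using this
      · filter_upwards with n
        have hpos : (0 : ℝ) < 1 / (n + 1 : ℝ) := by positivity
        simp only [Set.mem_compl_iff, Set.mem_singleton_iff]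
        intro h
        nlinarith [h]
    have := hslope.comp ht
    refine this.congr fun n => ?_
    simp only [Function.comp_apply, slope_def_field]
    rw [show q.1 + 1 / (n + 1 : ℝ) - q.1 = 1 / (n + 1 : ℝ) by ring]
  -- integrability of ψ on (Ioo a b) × X
  have hInt : Integrable (fun q : ℝ × X => ψ q.1 q.2)
      (((volume : Measure ℝ).restrict (Set.Ioo a b)).prod μ) := by
    refine ⟨haemeas.aestronglyMeasurable, ?_⟩
    rw [hasFiniteIntegral_iff_norm]
    simp_rw [Real.norm_eq_abs]
    have hm : AEMeasurable (fun z : ℝ × X => ENNReal.ofReal |ψ z.1 z.2|)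
        (((volume : Measure ℝ).restrict (Set.Ioo a b)).prod μ) :=
      (measurable_abs.comp_aemeasurable haemeas).ennreal_ofReal
    rw [MeasureTheory.lintegral_prod _ hm]
    exact h2int
  -- for a.e. x, ψ(·, x) is integrable on Ioo a b
  have haex : ∀ᵐ x ∂μ, IntegrableOn (fun t => ψ t x) (Set.Ioo a b) volume := by
    have := hInt.swap.prod_right_ae
    filter_upwards [this] with x hx
    exact hx
  -- integrability of G on Ioo a b
  have hGint : IntegrableOn G (Set.Ioo a b) volume := hInt.integral_prod_left
  -- key identity: F d - F c = ∫ t in Ioc c d, G t for c ≤ d in Ioo a b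
  have key : ∀ c ∈ Set.Ioo a b, ∀ d ∈ Set.Ioo a b, c ≤ d →
      F d - F c = ∫ t in Set.Ioc c d, G t := by
    intro c hc d hd hcd
    have hsub : Set.Icc c d ⊆ Set.Ioo a b := fun t ht =>
      ⟨lt_of_lt_of_le hc.1 ht.1, lt_of_le_of_lt ht.2 hd.2⟩
    have hae : ∀ᵐ x ∂μ, φ d x - φ c x = ∫ t in Set.Ioc c d, ψ t x := by
      filter_upwards [haex] with x hx
      have hii : IntervalIntegrable (fun t => ψ t x) volume c d := by
        rw [intervalIntegrable_iff_integrableOn_Ioc_of_le hcd]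
        exact hx.mono_set ((Set.Ioc_subset_Icc_self).trans hsub)
      have := intervalIntegral.integral_eq_sub_of_hasDerivAt
        (f := fun s' => φ s' x) (f' := fun t => ψ t x)
        (fun t ht => hasD x t (hsub (by rwa [Set.uIcc_of_le hcd] at ht))) hii
      rw [intervalIntegral.integral_of_le hcd] at this
      linarith [this]
    have hswap : ∫ x, (∫ t in Set.Ioc c d, ψ t x) ∂μ = ∫ t in Set.Ioc c d, G t := by
      have hsub2 : Set.Ioc c d ⊆ Set.Ioo a b := Set.Ioc_subset_Icc_self.trans hsub
      have h1' : Integrable (fun q : ℝ × X => ψ q.1 q.2)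
          (((volume : Measure ℝ).restrict (Set.Ioc c d)).prod μ) := by
        have h := hInt.restrict (s := (Set.Ioc c d) ×ˢ (Set.univ : Set X))
        rwa [← Measure.prod_restrict, Measure.restrict_restrict measurableSet_Ioc,
          Set.inter_eq_left.mpr hsub2, Measure.restrict_univ] at h
      exact MeasureTheory.integral_integral_swap (f := fun x t => ψ t x) h1'.swap
    calc F d - F c = ∫ x, (φ d x - φ c x) ∂μ := (integral_sub (h1 d hd) (h1 c hc)).symm
      _ = ∫ x, (∫ t in Set.Ioc c d, ψ t x) ∂μ := integral_congr_ae hae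
      _ = ∫ t in Set.Ioc c d, G t := hswap
  -- F u = F s + ∫ t in s..u, G t for s, u ∈ Ioo a b
  have hFeq : ∀ s ∈ Set.Ioo a b, ∀ u ∈ Set.Ioo a b,
      F u = F s + ∫ t in s..u, G t := by
    intro s hs u hu
    rcases le_total s u with h | h
    · rw [intervalIntegral.integral_of_le h, ← key s hs u hu h]; ring
    · rw [intervalIntegral.integral_symm, intervalIntegral.integral_of_le h,
        ← key u hu s hs h]; ring
  -- main derivative claim
  have hasDF : ∀ s ∈ Set.Ioo a b, HasDerivAt F (G s) s := by
    intro s hs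
    have hmem : Set.Ioo a b ∈ 𝓝 s := isOpen_Ioo.mem_nhds hs
    have hH : HasDerivAt (fun u => F s + ∫ t in s..u, G t) (G s) s := by
      refine HasDerivAt.const_add _ ?_
      refine intervalIntegral.integral_hasDerivAt_right
        IntervalIntegrable.refl ?_ ?_
      · exact ⟨Set.Ioo a b, hmem, hGint.aestronglyMeasurable⟩
      · exact h3.continuousAt hmem
    refine hH.congr_of_eventuallyEq ?_
    filter_upwards [hmem] with u hu
    exact hFeq s hs u hu
  intro s hs
  refine ⟨hasDF s hs, ?_⟩
  exact h3.congr fun t ht => (hasDF t ht).deriv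
end
end
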